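/- Under the trust bias model, the IPS-corrected residual term has zero conditional expectation: E_{y,c}[ (ω(d)/ρ₀(d)) · (c(d) − α_{k(d)}·R̂(d) − β_{k(d)}) ] = (ω(d)/ρ₀(d)) · ρ₀(d) · (R(d) − R̂(d)) = ω(d)·(R(d) − R̂(d)), hence the doubly robust estimator Û_DM + correction is unbiased for Σ_d ω(d)·R(d). -/

import Mathlib

open Finset

noncomputable def expec {Ω : Type*} [Fintype Ω] (p : Ω → ℝ) (f : Ω → ℝ) : ℝ :=
  ∑ ω, p ω * f ω

lemma expec_const_mul {Ω : Type*} [Fintype Ω] (p : Ω → ℝ) (k : ℝ) (f : Ω → ℝ) :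
    expec p (fun ω => k * f ω) = k * expec p f := by
  simp [expec, Finset.mul_sum]; apply Finset.sum_congr rfl; intros; ring

lemma expec_add {Ω : Type*} [Fintype Ω] (p : Ω → ℝ) (f g : Ω → ℝ) :
    expec p (fun ω => f ω + g ω) = expec p f + expec p g := by
  simp [expec, ← Finset.sum_add_distrib, mul_add]

lemma expec_sub {Ω : Type*} [Fintype Ω] (p : Ω → ℝ) (f g : Ω → ℝ) :
    expec p (fun ω => f ω - g ω) = expec p f - expec p g := by
  simp [expec, ← Finset.sum_sub_distrib, mul_sub]

/-- Under the trust bias model, the IPS-corrected residual has expectation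
`ω(d)·(R(d) − R̂(d))` per document, hence the doubly robust estimator
(direct method plus correction) is unbiased for `Σ_d ω(d)·R(d)`. -/
theorem dr_estimator_unbiased {Ω D : Type*} [Fintype Ω] [Fintype D]
    (p : Ω → ℝ) (hp : ∀ ω, 0 ≤ p ω) (hsum : ∑ ω, p ω = 1)
    (A B c : Ω → D → ℝ) (R Rhat w : D → ℝ)
    (hclick : ∀ d, expec p (fun ω => c ω d)
        = expec p (fun ω => A ω d * R d + B ω d))
    (hρ : ∀ d, 0 < expec p (fun ω => A ω d)) :
    (∀ d, expec p (fun ω =>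
        (w d / expec p (fun ω' => A ω' d)) * (c ω d - A ω d * Rhat d - B ω d))
      = w d * (R d - Rhat d)) ∧
    expec p (fun ω => (∑ d, w d * Rhat d)
        + ∑ d, (w d / expec p (fun ω' => A ω' d)) * (c ω d - A ω d * Rhat d - B ω d))
      = ∑ d, w d * R d := by
  have key : ∀ d, expec p (fun ω =>
      (w d / expec p (fun ω' => A ω' d)) * (c ω d - A ω d * Rhat d - B ω d))
      = w d * (R d - Rhat d) := by
    intro d
    set ρ := expec p (fun ω' => A ω' d) with hρdef
    have hne : ρ ≠ 0 := (hρ d).ne'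
    have h1 : expec p (fun ω => c ω d - A ω d * Rhat d - B ω d)
        = ρ * (R d - Rhat d) := by
      have h2 := hclick d
      rw [expec_sub p (fun ω => c ω d - A ω d * Rhat d) (fun ω => B ω d),
        expec_sub p (fun ω => c ω d) (fun ω => A ω d * Rhat d), h2,
        expec_add p (fun ω => A ω d * R d) (fun ω => B ω d)]
      have hA : ∀ k : ℝ, expec p (fun ω => A ω d * k) = ρ * k := by
        intro k
        simp only [expec, hρdef, Finset.sum_mul]
        exact Finset.sum_congr rfl fun _ _ => by ring
      rw [hA (R d), hA (Rhat d)]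
      ring
    rw [expec_const_mul p (w d / ρ) (fun ω => c ω d - A ω d * Rhat d - B ω d), h1]
    field_simp
  refine ⟨key, ?_⟩
  rw [expec_add p (fun _ => ∑ d, w d * Rhat d)
      (fun ω => ∑ d, (w d / expec p (fun ω' => A ω' d)) * (c ω d - A ω d * Rhat d - B ω d))]
  have hconst : expec p (fun _ => ∑ d, w d * Rhat d) = ∑ d, w d * Rhat d := by
    simp [expec, ← Finset.sum_mul, hsum]
  have hswap : expec p (fun ω => ∑ d,
      (w d / expec p (fun ω' => A ω' d)) * (c ω d - A ω d * Rhat d - B ω d))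
      = ∑ d, expec p (fun ω =>
      (w d / expec p (fun ω' => A ω' d)) * (c ω d - A ω d * Rhat d - B ω d)) := by
    simp [expec, Finset.mul_sum]
    rw [Finset.sum_comm]
  rw [hconst, hswap]
  have : ∑ d, expec p (fun ω =>
      (w d / expec p (fun ω' => A ω' d)) * (c ω d - A ω d * Rhat d - B ω d))
      = ∑ d, w d * (R d - Rhat d) := Finset.sum_congr rfl (fun d _ => key d)
  rw [this, ← Finset.sum_add_distrib]
  apply Finset.sum_congr rfl; intros; ring
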